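/- Let P be the probability measure with density 3/2 on J₁ = [0, 1/3] and 9/4 on J₂ = [2/3, 7/9] ∪ J₃ = [8/9, 1]. For n ≥ 1, the set {(2i-1)/(6n) : 1 ≤ i ≤ n} of midpoints satisfies ∫_{J₁} min_i (x - (2i-1)/(6n))^2 dP = 1/(216 n²), and analogously the n equally spaced midpoints in J₂ (resp. J₃) give distortion 1/(3888 n²) on J₂ (resp. J₃). -/

import Mathlib

/-!
On `[lo, lo + n w]` cut into `n` cells of width `w`, the nearest of the `n` cell midpoints to a
point is the midpoint of its own cell. So the distortion integral splits into `n` copies of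
`∫_{-w/2}^{w/2} t² dt = w³/12`. On each of `J₁, J₂, J₃` the measure `Q` is a constant multiple of
Lebesgue measure, which turns this into the three stated values.
-/

open MeasureTheory Set

/-- The density: `3/2` on `[0,1/3]`, `9/4` on `[2/3,7/9] ∪ [8/9,1]`, `0` elsewhere. -/
noncomputable def g (x : ℝ) : ℝ :=
  Set.indicator (Set.Icc (0 : ℝ) (1 / 3)) (fun _ => (3 : ℝ) / 2) x +
    Set.indicator (Set.Icc ((2 : ℝ) / 3) (7 / 9) ∪ Set.Icc ((8 : ℝ) / 9) 1)
      (fun _ => (9 : ℝ) / 4) x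

/-- The piecewise uniform probability measure with finitely many pieces. -/
noncomputable def Q : Measure ℝ :=
  MeasureTheory.volume.withDensity (fun x => ENNReal.ofReal (g x))

section Midpoints

variable {lo w : ℝ}

lemma sq_sub_midpoint_le_of_mem_Icc (hw : 0 ≤ w) {k : ℕ} {x : ℝ}
    (hx : x ∈ Icc (lo + k * w) (lo + (k + 1) * w)) (j : ℕ) :
    (x - (lo + (2 * k + 1) * w / 2)) ^ 2 ≤ (x - (lo + (2 * j + 1) * w / 2)) ^ 2 := by
  obtain ⟨hx₁, hx₂⟩ := hx
  rcases lt_trichotomy j k with hjk | rfl | hkj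
  · have : (j : ℝ) + 1 ≤ k := by exact_mod_cast hjk
    nlinarith [mul_le_mul_of_nonneg_right this hw]
  · exact le_rfl
  · have : (k : ℝ) + 1 ≤ j := by exact_mod_cast hkj
    nlinarith [mul_le_mul_of_nonneg_right this hw]

lemma iInf_sq_sub_midpoint_of_mem_Icc {n : ℕ} (hw : 0 ≤ w) (k : Fin n) {x : ℝ}
    (hx : x ∈ Icc (lo + k * w) (lo + (k + 1) * w)) :
    ⨅ i : Fin n, (x - (lo + (2 * i + 1) * w / 2)) ^ 2 = (x - (lo + (2 * k + 1) * w / 2)) ^ 2 := by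
  have : Nonempty (Fin n) := ⟨k⟩
  exact le_antisymm (ciInf_le ⟨0, by rintro _ ⟨i, rfl⟩; positivity⟩ k)
    (le_ciInf fun j => sq_sub_midpoint_le_of_mem_Icc hw hx j)

lemma integral_sq_sub_midpoint (a w : ℝ) :
    ∫ x in a..a + w, (x - (a + w / 2)) ^ 2 = w ^ 3 / 12 := by
  rw [intervalIntegral.integral_comp_sub_right (· ^ 2), integral_pow]
  ring

lemma integral_iInf_sq_sub_midpoint (n : ℕ) (hw : 0 ≤ w) :
    ∫ x in lo..lo + n * w, ⨅ i : Fin n, (x - (lo + (2 * i + 1) * w / 2)) ^ 2 = n * w ^ 3 / 12 := by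
  set F : ℝ → ℝ := fun x => ⨅ i : Fin n, (x - (lo + (2 * i + 1) * w / 2)) ^ 2
  set a : ℕ → ℝ := fun k => lo + k * w
  have hcell : ∀ k < n, EqOn F (fun x => (x - (a k + w / 2)) ^ 2) (uIcc (a k) (a (k + 1))) := by
    intro k hk x hx
    rw [uIcc_of_le (by simp only [a]; push_cast; linarith)] at hx
    have hx' : x ∈ Icc (lo + k * w) (lo + (k + 1) * w) := by simpa [a] using hx
    simp only [F, a, iInf_sq_sub_midpoint_of_mem_Icc hw ⟨k, hk⟩ hx']
    ring
  have hsum := intervalIntegral.sum_integral_adjacent_intervals (f := F) (a := a) (μ := volume)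
    fun k hk => (((continuous_pow 2).comp (continuous_sub_right _)).continuousOn.congr
      (hcell k hk)).intervalIntegrable
  have hcells : ∀ k ∈ Finset.range n, ∫ x in a k..a (k + 1), F x = w ^ 3 / 12 := by
    intro k hk
    rw [intervalIntegral.integral_congr (hcell k (Finset.mem_range.1 hk)),
      show a (k + 1) = a k + w by simp only [a]; push_cast; ring, integral_sq_sub_midpoint]
  simp only [a, Nat.cast_zero, zero_mul, add_zero] at hsum
  rw [← hsum, Finset.sum_congr rfl hcells, Finset.sum_const, Finset.card_range, nsmul_eq_mul]
  ring

end Midpoints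

lemma setIntegral_Icc_iInf_sq_sub_midpoint {n : ℕ} (hn : n ≠ 0) {a b : ℝ} (hab : a ≤ b)
    (m : Fin n → ℝ) (hm : ∀ i : Fin n, m i = a + (2 * i + 1) * (b - a) / (2 * n)) :
    ∫ x in Icc a b, ⨅ i, (x - m i) ^ 2 = (b - a) ^ 3 / (12 * n ^ 2) := by
  have hn' : (n : ℝ) ≠ 0 := Nat.cast_ne_zero.2 hn
  obtain ⟨w, hw⟩ : ∃ w, w = (b - a) / n := ⟨_, rfl⟩
  have hb : a + n * w = b := by rw [hw]; field_simp; ring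
  have hm' : ∀ i : Fin n, m i = a + (2 * i + 1) * w / 2 := fun i => by rw [hm, hw]; field_simp
  have hcells := integral_iInf_sq_sub_midpoint (lo := a) n
    (hw ▸ div_nonneg (sub_nonneg.2 hab) n.cast_nonneg)
  rw [hb] at hcells
  simp_rw [integral_Icc_eq_integral_Ioc, ← intervalIntegral.integral_of_le hab, hm', hcells, hw]
  field_simp

lemma setIntegral_withDensity_of_eqOn_const {α : Type*} [MeasurableSpace α] {μ : Measure α}
    {ρ : α → ENNReal} {s : Set α} (hs : MeasurableSet s) {c : ENNReal}
    (hρ : EqOn ρ (fun _ => c) s) (f : α → ℝ) :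
    ∫ x in s, f x ∂μ.withDensity ρ = c.toReal * ∫ x in s, f x ∂μ := by
  rw [restrict_withDensity hs, withDensity_congr_ae (ae_restrict_of_forall_mem hs hρ),
    withDensity_const, integral_smul_measure, smul_eq_mul]

lemma setIntegral_Q_of_eqOn_g {s : Set ℝ} (hs : MeasurableSet s) {c : ℝ} (hc : 0 ≤ c)
    (hg : EqOn g (fun _ => c) s) (f : ℝ → ℝ) :
    ∫ x in s, f x ∂Q = c * ∫ x in s, f x := by
  rw [Q, setIntegral_withDensity_of_eqOn_const hs (c := ENNReal.ofReal c)
    fun x hx => congrArg ENNReal.ofReal (hg hx),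
    ENNReal.toReal_ofReal hc]

lemma g_eqOn_J₁ : EqOn g (fun _ => 3 / 2) (Icc 0 (1 / 3)) := by
  intro x hx
  rw [g, indicator_of_mem hx, indicator_of_notMem]
  · ring
  · rintro (h | h) <;> linarith [h.1, hx.2]

lemma g_eqOn_J₂ : EqOn g (fun _ => 9 / 4) (Icc (2 / 3) (7 / 9)) := by
  intro x hx
  rw [g, indicator_of_notMem (fun h => by linarith [h.2, hx.1]),
    indicator_of_mem (mem_union_left _ hx)]
  ring

lemma g_eqOn_J₃ : EqOn g (fun _ => 9 / 4) (Icc (8 / 9) 1) := by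
  intro x hx
  rw [g, indicator_of_notMem (fun h => by linarith [h.2, hx.1]),
    indicator_of_mem (mem_union_right _ hx)]
  ring

theorem stmt_13 (n : ℕ) (hn : 1 ≤ n) :
    (∫ x in Set.Icc (0 : ℝ) (1 / 3),
        (⨅ i : Fin n, (x - (2 * (i : ℝ) + 1) / (6 * n)) ^ 2 : ℝ) ∂Q) = 1 / (216 * n ^ 2) ∧
    (∫ x in Set.Icc ((2 : ℝ) / 3) (7 / 9),
        (⨅ i : Fin n, (x - (2 / 3 + (2 * (i : ℝ) + 1) / (18 * n))) ^ 2 : ℝ) ∂Q) =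
      1 / (3888 * n ^ 2) ∧
    (∫ x in Set.Icc ((8 : ℝ) / 9) 1,
        (⨅ i : Fin n, (x - (8 / 9 + (2 * (i : ℝ) + 1) / (18 * n))) ^ 2 : ℝ) ∂Q) =
      1 / (3888 * n ^ 2) := by
  have hn0 : n ≠ 0 := Nat.one_le_iff_ne_zero.1 hn
  refine ⟨?_, ?_, ?_⟩
  · rw [setIntegral_Q_of_eqOn_g measurableSet_Icc (by norm_num) g_eqOn_J₁,
      setIntegral_Icc_iInf_sq_sub_midpoint hn0 (by norm_num) _ fun i => by field_simp; ring]
    field_simp; ring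
  · rw [setIntegral_Q_of_eqOn_g measurableSet_Icc (by norm_num) g_eqOn_J₂,
      setIntegral_Icc_iInf_sq_sub_midpoint hn0 (by norm_num) _ fun i => by field_simp; ring]
    field_simp; ring
  · rw [setIntegral_Q_of_eqOn_g measurableSet_Icc (by norm_num) g_eqOn_J₃,
      setIntegral_Icc_iInf_sq_sub_midpoint hn0 (by norm_num) _ fun i => by field_simp; ring]
    field_simp; ring
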